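/- arXiv:1701.06144 — 2 statements merged into one kernel-verified Lean document; each statement's English description precedes it below -/
import Mathlib

section
/- Let k be a field, let W = ∏_{n : ℕ} k, and let V be a k-vector space that is not finite-dimensional. Then the canonical k-linear map α : W ⊗_k V → ∏_{n : ℕ} V, determined on pure tensors by α(w ⊗ v) = (fun n => (w n) • v), is not surjective. -/
open scoped TensorProduct

/-- If `V` is not finite-dimensional over `k`, then the canonical map
`α : (∏_{n : ℕ} k) ⊗[k] V → ∏_{n : ℕ} V`, determined on pure tensors by
`α (w ⊗ v) = fun n => w n • v`, is not surjective. -/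
theorem canonical_map_not_surjective_of_not_finiteDimensional
    (k : Type*) [Field k] (V : Type*) [AddCommGroup V] [Module k V]
    (hV : ¬ FiniteDimensional k V)
    (α : ((∀ _ : ℕ, k) ⊗[k] V) →ₗ[k] (∀ _ : ℕ, V))
    (hα : ∀ (w : ∀ _ : ℕ, k) (v : V), α (w ⊗ₜ[k] v) = fun n => w n • v) :
    ¬ Function.Surjective α := by
  classical
  intro hsurj
  -- get a linearly independent sequence
  let B := Module.Basis.ofVectorSpace k V
  have hinf : (Module.Basis.ofVectorSpaceIndex k V).Infinite := by
    intro hfin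
    have := hfin.to_subtype
    exact hV (Module.Finite.of_basis B)
  let e : ℕ ↪ Module.Basis.ofVectorSpaceIndex k V := hinf.natEmbedding _
  let g : ℕ → V := fun n => B (e n)
  have hg : LinearIndependent k g := B.linearIndependent.comp e e.injective
  obtain ⟨t, ht⟩ := hsurj g
  obtain ⟨S, rfl⟩ := TensorProduct.exists_finset t
  set U : Submodule k V := Submodule.span k (↑(S.image Prod.snd : Finset V) : Set V) with hU
  have hUfin : FiniteDimensional k U := FiniteDimensional.span_finset k _
  have hmem : ∀ n, g n ∈ U := by
    intro n
    rw [← ht]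
    rw [map_sum]
    have : (∑ i ∈ S, α (i.1 ⊗ₜ[k] i.2)) n = ∑ i ∈ S, (α (i.1 ⊗ₜ[k] i.2)) n :=
      Finset.sum_apply n S _
    rw [this]
    refine Submodule.sum_mem _ fun i hi => ?_
    rw [hα]
    exact Submodule.smul_mem _ _ (Submodule.subset_span (by
      exact Finset.mem_coe.2 (Finset.mem_image_of_mem Prod.snd hi)))
  let g' : ℕ → U := fun n => ⟨g n, hmem n⟩
  have hg' : LinearIndependent k g' := by
    have : g = U.subtype ∘ g' := rfl
    exact LinearIndependent.of_comp U.subtype (this ▸ hg)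
  exact (instInfiniteNat).not_finite hg'.finite
end

section
/- The canonical ℤ/2ℤ-linear map (∏_{n : ℕ} ℤ/2ℤ) ⊗_{ℤ/2ℤ} (ℚˣ ⊗_ℤ ℤ/2ℤ) → ∏_{n : ℕ} (ℚˣ ⊗_ℤ ℤ/2ℤ), determined on pure tensors by w ⊗ v ↦ (fun n => (w n) • v), is not surjective. -/
open scoped TensorProduct

noncomputable section CanAux

/-- Valuation mod 2 as additive hom on `Additive ℚˣ`. -/
def psiP (p : ℕ) [Fact p.Prime] : Additive ℚˣ →+ ZMod 2 where
  toFun x := ((padicValRat p ((Additive.toMul x : ℚˣ) : ℚ) : ℤ) : ZMod 2)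
  map_zero' := by simp
  map_add' x y := by
    have h := padicValRat.mul (p := p)
      (Units.ne_zero (Additive.toMul x)) (Units.ne_zero (Additive.toMul y))
    simp only [toMul_add, Units.val_mul] at *
    rw [h]
    push_cast
    ring

/-- Linear functional on the tensor product. -/
def chiP (p : ℕ) [Fact p.Prime] :
    ((ZMod 2) ⊗[ℤ] (Additive ℚˣ)) →ₗ[ℤ] ZMod 2 :=
  TensorProduct.lift (LinearMap.mk₂ ℤ (fun c x => c * psiP p x)
    (fun c c' x => by simp [add_mul])
    (fun m c x => by simp [smul_mul_assoc, mul_assoc])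
    (fun c x y => by simp [map_add, mul_add])
    (fun m c x => by simp [map_zsmul, mul_smul_comm]; ring))

theorem chiP_tmul (p : ℕ) [Fact p.Prime] (c : ZMod 2) (x : Additive ℚˣ) :
    chiP p (c ⊗ₜ[ℤ] x) = c * psiP p x := rfl

/-- The unit of ℚ given by the `n`-th prime. -/
def primeUnit (n : ℕ) : ℚˣ :=
  Units.mk0 ((Nat.nth Nat.Prime n : ℕ) : ℚ)
    (by exact_mod_cast (Nat.nth_mem_of_infinite Nat.infinite_setOf_prime n).pos.ne')

theorem psiP_primeUnit (p n : ℕ) [hp : Fact p.Prime] :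
    psiP p (Additive.ofMul (primeUnit n)) =
      ((padicValNat p (Nat.nth Nat.Prime n) : ℤ) : ZMod 2) := by
  simp [psiP, primeUnit, padicValRat.of_int, padicValInt.of_nat]

end CanAux

theorem canonical_map_rat_units_mod_two_not_surjective
    (α : ((∀ _ : ℕ, ZMod 2) ⊗[ZMod 2] ((ZMod 2) ⊗[ℤ] (Additive ℚˣ))) →ₗ[ZMod 2]
      (∀ _ : ℕ, (ZMod 2) ⊗[ℤ] (Additive ℚˣ)))
    (hα : ∀ (w : ∀ _ : ℕ, ZMod 2) (v : (ZMod 2) ⊗[ℤ] (Additive ℚˣ)),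
      α (w ⊗ₜ[ZMod 2] v) = fun n => w n • v) :
    ¬ Function.Surjective α := by
  intro hsurj
  set M := (ZMod 2) ⊗[ℤ] (Additive ℚˣ)
  -- the target element
  set f : ∀ _ : ℕ, M := fun n => (1 : ZMod 2) ⊗ₜ[ℤ] Additive.ofMul (primeUnit n) with hf
  obtain ⟨t, ht⟩ := hsurj f
  -- every image coordinate lies in the span of finitely many elements
  have key : ∀ t : ((∀ _ : ℕ, ZMod 2) ⊗[ZMod 2] M),
      ∃ s : Set M, s.Finite ∧ ∀ n, α t n ∈ Submodule.span (ZMod 2) s := by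
    intro t
    induction t using TensorProduct.induction_on with
    | zero => exact ⟨∅, Set.finite_empty, fun n => by simp⟩
    | tmul w v =>
        refine ⟨{v}, Set.finite_singleton _, fun n => ?_⟩
        rw [hα]
        exact Submodule.smul_mem _ _ (Submodule.subset_span rfl)
    | add x y hx hy =>
        obtain ⟨s₁, hs₁, h₁⟩ := hx
        obtain ⟨s₂, hs₂, h₂⟩ := hy
        refine ⟨s₁ ∪ s₂, hs₁.union hs₂, fun n => ?_⟩
        rw [map_add]
        exact Submodule.add_mem _
          (Submodule.span_mono Set.subset_union_left (h₁ n))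
          (Submodule.span_mono Set.subset_union_right (h₂ n))
  obtain ⟨s, hsfin, hs⟩ := key t
  rw [ht] at hs
  -- the span is a finite set
  have : Module.Finite (ZMod 2) (Submodule.span (ZMod 2) s) :=
    Module.Finite.span_of_finite _ hsfin
  have hfin : Finite (Submodule.span (ZMod 2) s) :=
    Module.finite_of_finite (ZMod 2)
  have hfinset : ((Submodule.span (ZMod 2) s : Submodule (ZMod 2) M) : Set M).Finite :=
    Set.toFinite _
  -- f is injective
  have hinj : Function.Injective f := by
    intro m n hmn
    by_contra hne
    have hpm : (Nat.nth Nat.Prime m).Prime :=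
      Nat.nth_mem_of_infinite Nat.infinite_setOf_prime m
    have hpn : (Nat.nth Nat.Prime n).Prime :=
      Nat.nth_mem_of_infinite Nat.infinite_setOf_prime n
    haveI : Fact (Nat.nth Nat.Prime m).Prime := ⟨hpm⟩
    have hchim := congrArg (chiP (Nat.nth Nat.Prime m)) hmn
    rw [chiP_tmul, chiP_tmul, one_mul, one_mul, psiP_primeUnit, psiP_primeUnit] at hchim
    have hne' : Nat.nth Nat.Prime m ≠ Nat.nth Nat.Prime n :=
      fun h => hne (Nat.nth_injective Nat.infinite_setOf_prime h)
    rw [padicValNat.self hpm.one_lt,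
      padicValNat.eq_zero_of_not_dvd
        (fun h => hne' ((Nat.prime_dvd_prime_iff_eq hpm hpn).mp h))] at hchim
    simp at hchim
  exact Set.infinite_coe_iff.mp
    (Set.infinite_coe_iff.mpr ((Set.infinite_range_of_injective hinj).mono
      (Set.range_subset_iff.mpr hs))) hfinset
end
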